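/- For finite trees over a well-quasi-ordered label set, the homeomorphic embedding relation is a well-quasi-order (Kruskal's tree theorem): in every infinite sequence of trees there exist indices i < j such that the i-th tree homeomorphically embeds into the j-th tree. -/

import Mathlib

/-- Finitely-branching rooted trees with labels from `A`. -/
inductive Tree' (A : Type) : Type
  | node : A → List (Tree' A) → Tree' A

mutual
  /-- Homeomorphic embedding of trees over the label relation `r`:
  `node a ts ⊴ node b us` if either `t` embeds into some `u ∈ us`, or
  `r a b` and `ts` embeds into `us` via Higman's list embedding w.r.t. `⊴`. -/
  inductive HEmb {A : Type} (r : A → A → Prop) : Tree' A → Tree' A → Prop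
    | sub {t u : Tree' A} {b : A} {us : List (Tree' A)} :
        u ∈ us → HEmb r t u → HEmb r t (.node b us)
    | couple {a b : A} {ts us : List (Tree' A)} :
        r a b → HEmbList r ts us → HEmb r (.node a ts) (.node b us)

  /-- Higman's list embedding with respect to `HEmb r`. -/
  inductive HEmbList {A : Type} (r : A → A → Prop) :
      List (Tree' A) → List (Tree' A) → Prop
    | nil (l : List (Tree' A)) : HEmbList r [] l
    | cons {x y : Tree' A} {xs ys : List (Tree' A)} :
        HEmb r x y → HEmbList r xs ys → HEmbList r (x :: xs) (y :: ys)
    | skip {l : List (Tree' A)} {y : Tree' A} {ys : List (Tree' A)} :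
        HEmbList r l ys → HEmbList r l (y :: ys)
end

/-!
Nash-Williams' minimal bad sequence argument. Take a bad sequence of trees that is minimal in size
at every index. The children of its trees are well-quasi-ordered: a bad sequence of children,
appended to the trees before the first index whose children it uses, would be a bad sequence that
is smaller at that index. By Higman's lemma the lists of children are then well-quasi-ordered too,
so on a subsequence along which the root labels increase two lists of children embed, and with
them the two trees.
-/

namespace Set.PartiallyWellOrderedOn

variable {α : Type*} {r : α → α → Prop} {rk : α → ℕ} {s : Set α} {f : ℕ → α}

theorem partiallyWellOrderedOn_iUnion_of_isMinBadSeq (hf : IsBadSeq r s f)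
    (hmin : ∀ n, IsMinBadSeq r rk s n f) {S : ℕ → Set α} (hSs : ∀ n, S n ⊆ s)
    (hrk : ∀ n, ∀ x ∈ S n, rk x < rk (f n))
    (hr : ∀ n, ∀ x ∈ S n, ∀ y, r y x → r y (f n)) :
    (⋃ n, S n).PartiallyWellOrderedOn r := by
  rw [partiallyWellOrderedOn_iff_exists_lt]
  intro g hg
  simp only [mem_iUnion] at hg
  choose idx hidx using hg
  by_contra! hgbad
  let k := Function.argmin idx
  set N := idx k
  let h : ℕ → α := fun m => if m < N then f m else g (k + (m - N))
  refine hmin N h (fun m hm => (if_pos hm).symm) ?_ ⟨fun m => ?_, fun m n hmn hr' => ?_⟩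
  · simpa [h] using hrk N (g k) (hidx k)
  · by_cases hm : m < N
    · simpa [h, hm] using hf.1 m
    · simpa [h, hm] using hSs _ (hidx (k + (m - N)))
  · by_cases hn : n < N
    · exact hf.2 m n hmn (by simpa [h, hn, hmn.trans hn] using hr')
    -- `g (k + j) ∈ S n'` for some `n' ≥ N`, as `idx k` is minimal.
    by_cases hm : m < N
    · exact hf.2 m _ (hm.trans_le (Function.argmin_le idx _))
        (hr _ _ (hidx (k + (n - N))) _ (by simpa [h, hm, hn] using hr'))
    · exact hgbad (k + (m - N)) (k + (n - N)) (by omega) (by simpa [h, hm, hn] using hr')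

end Set.PartiallyWellOrderedOn

namespace Tree'

variable {A : Type}

def label : Tree' A → A
  | node a _ => a

def children : Tree' A → List (Tree' A)
  | node _ ts => ts

theorem sizeOf_lt_of_mem_children {t u : Tree' A} (h : t ∈ u.children) :
    sizeOf t < sizeOf u := by
  obtain ⟨a, us⟩ := u
  have := List.sizeOf_lt_of_mem h
  simp only [children] at this
  simp only [node.sizeOf_spec]
  omega

end Tree'

section Embedding

variable {A : Type} {r : A → A → Prop}

mutual

theorem HEmb.refl [Std.Refl r] : ∀ t : Tree' A, HEmb r t t
  | .node a ts => .couple (refl_of r a) (HEmbList.refl ts)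

theorem HEmbList.refl [Std.Refl r] : ∀ ts : List (Tree' A), HEmbList r ts ts
  | [] => .nil []
  | t :: ts => .cons (HEmb.refl t) (HEmbList.refl ts)

end

mutual

theorem HEmb.trans [IsTrans A r] {t u v : Tree' A} : HEmb r t u → HEmb r u v → HEmb r t v
  | htu, .sub hw huw => .sub hw (HEmb.trans htu huw)
  | .sub hu' htu', .couple _ hl =>
    let ⟨_, hw, htw⟩ := HEmbList.exists_mem_hEmb_of_hEmb_mem hl hu' htu'
    .sub hw htw
  | .couple hab hts, .couple hbc hus => .couple (_root_.trans hab hbc) (HEmbList.trans hts hus)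

theorem HEmbList.trans [IsTrans A r] {ts us vs : List (Tree' A)} :
    HEmbList r ts us → HEmbList r us vs → HEmbList r ts vs
  | hts, .skip hus => .skip (HEmbList.trans hts hus)
  | .nil _, _ => .nil _
  | .cons hx hxs, .cons hy hys => .cons (HEmb.trans hx hy) (HEmbList.trans hxs hys)
  | .skip hts, .cons _ hus => .skip (HEmbList.trans hts hus)

theorem HEmbList.exists_mem_hEmb_of_hEmb_mem [IsTrans A r] {t u : Tree' A}
    {us vs : List (Tree' A)} :
    HEmbList r us vs → u ∈ us → HEmb r t u → ∃ v ∈ vs, HEmb r t v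
  | .cons huv _, .head _, htu => ⟨_, .head _, HEmb.trans htu huv⟩
  | .cons _ hus, .tail _ hu, htu =>
    let ⟨v, hv, htv⟩ := HEmbList.exists_mem_hEmb_of_hEmb_mem hus hu htu
    ⟨v, .tail _ hv, htv⟩
  | .skip hus, hu, htu =>
    let ⟨v, hv, htv⟩ := HEmbList.exists_mem_hEmb_of_hEmb_mem hus hu htu
    ⟨v, .tail _ hv, htv⟩

end

instance [IsPreorder A r] : IsPreorder (Tree' A) (HEmb r) where
  refl := HEmb.refl
  trans _ _ _ := HEmb.trans

theorem HEmbList.of_sublistForall₂ {ts us : List (Tree' A)}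
    (h : List.SublistForall₂ (HEmb r) ts us) : HEmbList r ts us := by
  induction h with
  | nil => exact .nil _
  | cons h _ ih => exact .cons h ih
  | cons_right _ ih => exact .skip ih

theorem HEmb.of_mem_children {t u v : Tree' A} (hu : u ∈ v.children) (h : HEmb r t u) :
    HEmb r t v := by
  obtain ⟨b, vs⟩ := v
  exact .sub hu h

theorem HEmb.of_label_of_children {t u : Tree' A} (hl : r t.label u.label)
    (hc : List.SublistForall₂ (HEmb r) t.children u.children) : HEmb r t u := by
  obtain ⟨a, ts⟩ := t
  obtain ⟨b, us⟩ := u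
  exact .couple hl (.of_sublistForall₂ hc)

theorem WellQuasiOrdered.hEmb [IsPreorder A r] (hr : WellQuasiOrdered r) :
    WellQuasiOrdered (HEmb r) := by
  rw [← Set.partiallyWellOrderedOn_univ_iff,
    Set.PartiallyWellOrderedOn.iff_not_exists_isMinBadSeq (fun t : Tree' A => sizeOf t)]
  rintro ⟨f, hf, hmin⟩
  have hchildren : (⋃ n, {t | t ∈ (f n).children}).PartiallyWellOrderedOn (HEmb r) :=
    Set.PartiallyWellOrderedOn.partiallyWellOrderedOn_iUnion_of_isMinBadSeq hf hmin
      (fun _ => Set.subset_univ _) (fun _ _ => Tree'.sizeOf_lt_of_mem_children)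
      (fun _ _ hu _ => HEmb.of_mem_children hu)
  obtain ⟨g, hg⟩ := hr.exists_monotone_subseq (fun n => (f n).label)
  obtain ⟨i, j, hij, hc⟩ :=
    (Set.PartiallyWellOrderedOn.partiallyWellOrderedOn_sublistForall₂ _ hchildren).exists_lt
      (f := fun n => (f (g n)).children) fun n t ht => Set.mem_iUnion.2 ⟨g n, ht⟩
  exact hf.2 _ _ (g.strictMono hij) (.of_label_of_children (hg i j hij.le) hc)

end Embedding

/-- Kruskal's tree theorem: homeomorphic embedding of finite trees over a
well-quasi-ordered label set is a well-quasi-order. -/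
theorem kruskal {A : Type} (r : A → A → Prop)
    (hrefl : ∀ a, r a a)
    (htrans : ∀ a b c, r a b → r b c → r a c)
    (hwqo : ∀ a : ℕ → A, ∃ i j, i < j ∧ r (a i) (a j)) :
    ∀ f : ℕ → Tree' A, ∃ i j, i < j ∧ HEmb r (f i) (f j) :=
  have : IsPreorder A r := { refl := hrefl, trans := htrans }
  WellQuasiOrdered.hEmb hwqo
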